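/- Let n ≥ 2 be an integer, let F be a finite field, and let χ be a multiplicative character of F with values in ℂ (extended by χ(0) = 0) such that χ^n is the trivial character. Then ∑_{x ∈ F} ∑_{y ∈ F} χ(f_n(x,y)) = ∑ χ((1−x)(1−y) / (xy(1−xy))), where f_n(x,y) = (xy)^{n−1}(1−x)(1−y)(1−xy)^{n−1} and the sum on the right is over all pairs (x, y) with x, y ∈ F ∖ {0}, x ≠ 1, y ≠ 1 and xy ≠ 1. -/

import Mathlib

/-! Wherever `g` is defined, `f_n = g · (xy(1-xy))^n`, and a character with `χ^n = 1` is blind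
to `n`-th powers of units; off that locus `f_n` itself vanishes, so `χ(f_n) = 0` there. -/

/-- The polynomial `f_n(x,y) = (xy)^{n-1}(1-x)(1-y)(1-xy)^{n-1}`. -/
def fpoly (n : ℕ) {F : Type*} [CommRing F] (x y : F) : F :=
  (x * y) ^ (n - 1) * (1 - x) * (1 - y) * (1 - x * y) ^ (n - 1)

theorem MulChar.apply_mul_pow_of_pow_eq_one {R R' : Type*} [CommMonoid R]
    [CommMonoidWithZero R'] {χ : MulChar R R'} {n : ℕ} (hχ : χ ^ n = 1) (a : R) (b : Rˣ) :
    χ (a * (b : R) ^ n) = χ a := by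
  rw [map_mul, map_pow, ← pow_apply_coe, hχ, one_apply_coe, mul_one]

theorem fpoly_ne_zero_iff {F : Type*} [CommRing F] [NoZeroDivisors F] {n : ℕ} (hn : 2 ≤ n)
    {x y : F} : fpoly n x y ≠ 0 ↔ x ≠ 0 ∧ y ≠ 0 ∧ x ≠ 1 ∧ y ≠ 1 ∧ x * y ≠ 1 := by
  simp only [fpoly, ne_eq, mul_eq_zero, pow_eq_zero_iff (by omega : n - 1 ≠ 0), sub_eq_zero,
    eq_comm (a := (1 : F))]
  tauto

theorem fpoly_eq_div_mul_pow {F : Type*} [Field F] {n : ℕ} (hn : n ≠ 0) {x y : F}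
    (hd : x * y * (1 - x * y) ≠ 0) :
    fpoly n x y = (1 - x) * (1 - y) / (x * y * (1 - x * y)) * (x * y * (1 - x * y)) ^ n := by
  obtain ⟨m, rfl⟩ := Nat.exists_eq_add_one_of_ne_zero hn
  rw [pow_succ', ← mul_assoc, div_mul_cancel₀ _ hd, fpoly, Nat.add_sub_cancel]
  simp only [mul_pow]
  ring

/-- Section 5.5 of the paper: for a multiplicative character `χ` of a finite
field `F` with `χ^n` trivial, the character sum of `χ ∘ f_n` over `F²` equals
the sum of `χ((1-x)(1-y)/(xy(1-xy)))` over the pairs `(x,y)` with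
`x, y ≠ 0`, `x ≠ 1`, `y ≠ 1`, `xy ≠ 1`. -/
theorem char_sum_eq_g_sum
    {F : Type*} [Field F] [Fintype F] [DecidableEq F]
    (n : ℕ) (hn : 2 ≤ n)
    (χ : MulChar F ℂ) (htriv : χ ^ n = 1) :
    ∑ x : F, ∑ y : F, χ (fpoly n x y)
      = ∑ p ∈ Finset.univ.filter
          (fun p : F × F => p.1 ≠ 0 ∧ p.2 ≠ 0 ∧ p.1 ≠ 1 ∧ p.2 ≠ 1 ∧ p.1 * p.2 ≠ 1),
          χ ((1 - p.1) * (1 - p.2) / (p.1 * p.2 * (1 - p.1 * p.2))) := by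
  have supported (p : F × F) (_ : p ∈ Finset.univ) (h : χ (fpoly n p.1 p.2) ≠ 0) :=
    (fpoly_ne_zero_iff hn).1 fun h0 ↦ h (by rw [h0, χ.map_zero])
  rw [← Fintype.sum_prod_type', ← Finset.sum_filter_of_ne supported]
  refine Finset.sum_congr rfl fun ⟨x, y⟩ hp ↦ ?_
  obtain ⟨hx0, hy0, -, -, hxy1⟩ := (Finset.mem_filter.1 hp).2
  have hd : x * y * (1 - x * y) ≠ 0 :=
    mul_ne_zero (mul_ne_zero hx0 hy0) (sub_ne_zero.2 (Ne.symm hxy1))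
  rw [fpoly_eq_div_mul_pow (by omega) hd]
  exact χ.apply_mul_pow_of_pow_eq_one htriv _ (Units.mk0 _ hd)
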